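/- arXiv:1006.0443 — 3 statements merged into one kernel-verified Lean document; each statement's English description precedes it below -/
import Mathlib

section
/- With F and D as defined, F(n,x) is strictly decreasing in x on the interval x ≥ n(n+1)(n+3)/4, for each fixed n ≥ 2 (assuming D(n,x) > 0 there). -/
noncomputable def Dq (n x : ℝ) : ℝ :=
  n ^ 2 * (n + 1) * (n + 2) * (n + 3) ^ 2 - 8 * n * (n + 1) * (n + 5) * x + 24 * x ^ 2

noncomputable def Fq (n x : ℝ) : ℝ :=
  (2 * x - n ^ 2 - 3 * n) * Real.sqrt ((n + 1) * (n + 2) * Dq n x) / (2 * Dq n x)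

/-- For fixed `n ≥ 2`, `F(n, ·)` is strictly decreasing on `[n(n+1)(n+3)/4, ∞)`,
assuming `D(n,x) > 0` there. -/
theorem stmt_8 (n : ℝ) (hn : 2 ≤ n)
    (hD : ∀ x : ℝ, n * (n + 1) * (n + 3) / 4 ≤ x → 0 < Dq n x) :
    StrictAntiOn (fun x => Fq n x) {x : ℝ | n * (n + 1) * (n + 3) / 4 ≤ x} := by
  intro a ha b hb hab
  simp only [Set.mem_setOf_eq] at ha hb
  have hDa : 0 < Dq n a := hD a ha
  have hDb : 0 < Dq n b := hD b hb
  have hc : (0:ℝ) < (n + 1) * (n + 2) := by nlinarith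
  -- positivity of numerators
  have hna : 0 < 2 * a - n ^ 2 - 3 * n := by nlinarith
  have hnb : 0 < 2 * b - n ^ 2 - 3 * n := by nlinarith
  set sa := Real.sqrt (Dq n a) with hsa_def
  set sb := Real.sqrt (Dq n b) with hsb_def
  set sc := Real.sqrt ((n + 1) * (n + 2)) with hsc_def
  have hsa : 0 < sa := Real.sqrt_pos.mpr hDa
  have hsb : 0 < sb := Real.sqrt_pos.mpr hDb
  have hsc : 0 < sc := Real.sqrt_pos.mpr hc
  have hsa2 : sa ^ 2 = Dq n a := Real.sq_sqrt hDa.le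
  have hsb2 : sb ^ 2 = Dq n b := Real.sq_sqrt hDb.le
  -- key polynomial inequality
  have key : (2 * b - n ^ 2 - 3 * n) ^ 2 * Dq n a
      < (2 * a - n ^ 2 - 3 * n) ^ 2 * Dq n b := by
    have hu : 0 ≤ a - n * (n + 1) * (n + 3) / 4 := by linarith
    have hv : 0 < b - n * (n + 1) * (n + 3) / 4 := by linarith
    have hR : 0 < n * (n - 1) * (n + 3) * ((a - n * (n + 1) * (n + 3) / 4)
        + (b - n * (n + 1) * (n + 3) / 4))
        + 8 * (a - n * (n + 1) * (n + 3) / 4) * (b - n * (n + 1) * (n + 3) / 4) := by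
      have h1 : 0 < n * (n - 1) * (n + 3) := by nlinarith
      have h2 : 0 ≤ (a - n * (n + 1) * (n + 3) / 4) * (b - n * (n + 1) * (n + 3) / 4) :=
        mul_nonneg hu hv.le
      nlinarith
    have hfac : (2 * a - n ^ 2 - 3 * n) ^ 2 * Dq n b
        - (2 * b - n ^ 2 - 3 * n) ^ 2 * Dq n a
        = (b - a) * (4 * n * (n - 1) * (n + 4)) *
          (n * (n - 1) * (n + 3) * ((a - n * (n + 1) * (n + 3) / 4)
            + (b - n * (n + 1) * (n + 3) / 4))
           + 8 * (a - n * (n + 1) * (n + 3) / 4) * (b - n * (n + 1) * (n + 3) / 4)) := by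
      simp only [Dq]; ring
    have hba : 0 < b - a := by linarith
    have hcoef : 0 < 4 * n * (n - 1) * (n + 4) := by nlinarith
    linarith [mul_pos (mul_pos hba hcoef) hR, hfac]
  -- deduce sqrt comparison
  have key' : (2 * b - n ^ 2 - 3 * n) * sa < (2 * a - n ^ 2 - 3 * n) * sb := by
    have h1 : ((2 * b - n ^ 2 - 3 * n) * sa) ^ 2
        < ((2 * a - n ^ 2 - 3 * n) * sb) ^ 2 := by
      have : ((2 * b - n ^ 2 - 3 * n) * sa) ^ 2
          = (2 * b - n ^ 2 - 3 * n) ^ 2 * Dq n a := by rw [mul_pow, hsa2]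
      rw [this]
      have : ((2 * a - n ^ 2 - 3 * n) * sb) ^ 2
          = (2 * a - n ^ 2 - 3 * n) ^ 2 * Dq n b := by rw [mul_pow, hsb2]
      rw [this]; exact key
    have h3 : 0 ≤ (2 * a - n ^ 2 - 3 * n) * sb := by positivity
    exact lt_of_pow_lt_pow_left₀ 2 h3 h1
  -- rewrite Fq
  have hF : ∀ x : ℝ, Fq n x = (2 * x - n ^ 2 - 3 * n) * (sc * Real.sqrt (Dq n x))
      / (2 * Dq n x) := by
    intro x
    rw [Fq, Real.sqrt_mul hc.le]
  show Fq n b < Fq n a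
  rw [hF a, hF b, div_lt_div_iff₀ (by linarith) (by linarith)]
  rw [← hsa2, ← hsb2, Real.sqrt_sq hsa.le, Real.sqrt_sq hsb.le]
  have hpos : (0:ℝ) < 2 * sc * sa * sb := by positivity
  have hk := mul_lt_mul_of_pos_left key' hpos
  have e1 : (2 * b - n ^ 2 - 3 * n) * (sc * sb) * (2 * sa ^ 2)
      = 2 * sc * sa * sb * ((2 * b - n ^ 2 - 3 * n) * sa) := by ring
  have e2 : (2 * a - n ^ 2 - 3 * n) * (sc * sa) * (2 * sb ^ 2)
      = 2 * sc * sa * sb * ((2 * a - n ^ 2 - 3 * n) * sb) := by ring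
  linarith [hk, e1, e2]
end

section
/- For all n ≥ 2, F(n, n(n+1)(n^2+n+10)/12) = sqrt(6)·(n^2+3n+8) / (12·sqrt(n^2−n+4)), and this value is strictly greater than sqrt(6(n+1)(n+2))/12. -/
set_option maxHeartbeats 1000000

/-- Value of `F` at `x = n(n+1)(n²+n+10)/12`, and it exceeds `sqrt(6(n+1)(n+2))/12`. -/
theorem stmt_9 (n : ℝ) (hn : 2 ≤ n) :
    Fq n (n * (n + 1) * (n ^ 2 + n + 10) / 12) =
      Real.sqrt 6 * (n ^ 2 + 3 * n + 8) / (12 * Real.sqrt (n ^ 2 - n + 4)) ∧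
    Real.sqrt (6 * (n + 1) * (n + 2)) / 12 <
      Fq n (n * (n + 1) * (n ^ 2 + n + 10) / 12) := by
  have hx : n * (n + 1) * (n ^ 2 + n + 10) / 12 = n * (n + 1) * (n ^ 2 + n + 10) / 12 := rfl
  set x : ℝ := n * (n + 1) * (n ^ 2 + n + 10) / 12 with hxdef
  have hA : (0:ℝ) < n ^ 2 - n + 4 := by nlinarith
  have hP : (0:ℝ) < n * (n - 1) * (n + 1) * (n + 2) := by nlinarith
  have hD : Dq n x = (n * (n - 1) * (n + 1) * (n + 2)) ^ 2 / ((n + 1) * (n + 2)) *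
      ((n ^ 2 - n + 4) / 6) := by
    have h12 : (n + 1) * (n + 2) ≠ 0 := by nlinarith
    rw [Dq, hxdef]
    field_simp
    ring
  have hDpos : 0 < Dq n x := by
    rw [hD]
    positivity
  set s : ℝ := Real.sqrt (n ^ 2 - n + 4) with hs
  set t : ℝ := Real.sqrt 6 with ht
  have hspos : 0 < s := Real.sqrt_pos.mpr hA
  have htpos : 0 < t := Real.sqrt_pos.mpr (by norm_num)
  have hs2 : s * s = n ^ 2 - n + 4 := Real.mul_self_sqrt hA.le
  have ht2 : t * t = 6 := Real.mul_self_sqrt (by norm_num)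
  have hsqrt : Real.sqrt ((n + 1) * (n + 2) * Dq n x) =
      n * (n - 1) * (n + 1) * (n + 2) * s / t := by
    have h1 : (n + 1) * (n + 2) * Dq n x = (n * (n - 1) * (n + 1) * (n + 2) / t * s) ^ 2 := by
      rw [hD]
      field_simp
      linear_combination ((n-1)^2*(n*(n-1)+4)) * ht2 - ((n-1)^2*6) * hs2
    rw [h1, Real.sqrt_sq (by positivity)]
    ring
  have hnum : 2 * x - n ^ 2 - 3 * n = n * (n - 1) * (n ^ 2 + 3 * n + 8) / 6 := by
    rw [hxdef]; ring
  have hval : Fq n x = t * (n ^ 2 + 3 * n + 8) / (12 * s) := by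
    rw [Fq, hsqrt, hnum, hD]
    have h12 : (n + 1) * (n + 2) ≠ 0 := by nlinarith
    field_simp [hA.ne', show n - 1 ≠ 0 by linarith, show n * (n - 1) + 4 ≠ 0 by nlinarith]
    linear_combination 12 * hs2 - (2*(n*(n-1)+4)) * ht2
  refine ⟨hval, ?_⟩
  rw [hval]
  have hrhs : 0 < t * (n ^ 2 + 3 * n + 8) / (12 * s) := by positivity
  have hsq : (Real.sqrt (6 * (n + 1) * (n + 2)) / 12) ^ 2 <
      (t * (n ^ 2 + 3 * n + 8) / (12 * s)) ^ 2 := by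
    have h1 : Real.sqrt (6 * (n + 1) * (n + 2)) ^ 2 = 6 * (n + 1) * (n + 2) :=
      Real.sq_sqrt (by nlinarith)
    have h2 : (t * (n ^ 2 + 3 * n + 8) / (12 * s)) ^ 2 =
        6 * (n ^ 2 + 3 * n + 8) ^ 2 / (144 * (n ^ 2 - n + 4)) := by
      rw [div_pow, mul_pow, mul_pow]
      rw [show t ^ 2 = 6 by rw [sq]; exact ht2, show s ^ 2 = n ^ 2 - n + 4 by
        rw [sq]; exact hs2]
      norm_num
    rw [div_pow, h1, h2]
    rw [div_lt_div_iff₀ (by norm_num) (by positivity)]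
    nlinarith
  exact lt_of_pow_lt_pow_left₀ 2 hrhs.le hsq
end

section
/- For all n ≥ 2, F(n, n(n+1)(n^2+5n+18)/24) = sqrt(6(n+2))·(n^2+7n+18) / (12·sqrt(n^3+5n^2+16n+36)), and this value is strictly less than 1 + sqrt(6(n+1)(n+2))/12. -/
set_option maxHeartbeats 800000

/-- Value of `F` at `x = n(n+1)(n²+5n+18)/24`, and it is less than `1 + sqrt(6(n+1)(n+2))/12`. -/
theorem stmt_10 (n : ℝ) (hn : 2 ≤ n) :
    Fq n (n * (n + 1) * (n ^ 2 + 5 * n + 18) / 24) =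
      Real.sqrt (6 * (n + 2)) * (n ^ 2 + 7 * n + 18) /
        (12 * Real.sqrt (n ^ 3 + 5 * n ^ 2 + 16 * n + 36)) ∧
    Fq n (n * (n + 1) * (n ^ 2 + 5 * n + 18) / 24) <
      1 + Real.sqrt (6 * (n + 1) * (n + 2)) / 12 := by
  have hn0 : (0:ℝ) < n := by linarith
  have hC : (0:ℝ) < n ^ 3 + 5 * n ^ 2 + 16 * n + 36 := by nlinarith
  set t := Real.sqrt (n ^ 3 + 5 * n ^ 2 + 16 * n + 36) with htdef
  set s := Real.sqrt (6 * (n + 2)) with hsdef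
  set u := Real.sqrt (6 * (n + 1) * (n + 2)) with hudef
  have ht2 : t ^ 2 = n ^ 3 + 5 * n ^ 2 + 16 * n + 36 := Real.sq_sqrt hC.le
  have ht : 0 < t := Real.sqrt_pos.mpr hC
  have hs2 : s ^ 2 = 6 * (n + 2) := Real.sq_sqrt (by linarith)
  have hs : 0 < s := Real.sqrt_pos.mpr (by linarith)
  have hu2 : u ^ 2 = 6 * (n + 1) * (n + 2) := Real.sq_sqrt (by nlinarith)
  have hu : 0 < u := Real.sqrt_pos.mpr (by nlinarith)
  have hD : Dq n (n * (n + 1) * (n ^ 2 + 5 * n + 18) / 24) =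
      n ^ 2 * (n - 1) ^ 2 * (n + 1) * (n ^ 3 + 5 * n ^ 2 + 16 * n + 36) / 24 := by
    unfold Dq; ring
  have hfac : (0:ℝ) < n * (n - 1) * (n + 1) / 12 := by nlinarith
  have hsqrt : Real.sqrt ((n + 1) * (n + 2) * Dq n (n * (n + 1) * (n ^ 2 + 5 * n + 18) / 24)) =
      (n * (n - 1) * (n + 1) / 12) * (s * t) := by
    rw [hD]
    have h1 : (n + 1) * (n + 2) *
        (n ^ 2 * (n - 1) ^ 2 * (n + 1) * (n ^ 3 + 5 * n ^ 2 + 16 * n + 36) / 24) =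
        (n * (n - 1) * (n + 1) / 12) ^ 2 *
          ((6 * (n + 2)) * (n ^ 3 + 5 * n ^ 2 + 16 * n + 36)) := by ring
    rw [h1, Real.sqrt_mul (sq_nonneg _), Real.sqrt_sq hfac.le,
      Real.sqrt_mul (by linarith : (0:ℝ) ≤ 6 * (n + 2))]
  have hFeq : Fq n (n * (n + 1) * (n ^ 2 + 5 * n + 18) / 24) =
      s * (n ^ 2 + 7 * n + 18) / (12 * t) := by
    unfold Fq
    rw [hsqrt, hD, ← ht2]
    have h1 : n ≠ 0 := ne_of_gt hn0
    have h2 : n - 1 ≠ 0 := by intro h; nlinarith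
    have h3 : n + 1 ≠ 0 := by intro h; nlinarith
    have h4 : t ≠ 0 := ne_of_gt ht
    field_simp
    ring
  refine ⟨hFeq, ?_⟩
  rw [hFeq]
  -- key bound: u ≥ 2.449 n + 3.4
  have hq2 : 2449 / 1000 * n + 17 / 5 ≤ u := by
    rw [hudef, Real.le_sqrt (by nlinarith) (by nlinarith)]
    nlinarith [sq_nonneg n, hn0]
  have hmain : s * (n ^ 2 + 7 * n + 18) < 12 * t + u * t := by
    have hsq : (s * (n ^ 2 + 7 * n + 18)) ^ 2 < (12 * t + u * t) ^ 2 := by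
      have hexp : (12 * t + u * t) ^ 2 = 144 * t ^ 2 + 24 * u * t ^ 2 + u ^ 2 * t ^ 2 := by ring
      rw [hexp, mul_pow, hs2, ht2, hu2]
      have hcu : (2449 / 1000 * n + 17 / 5) * (n ^ 3 + 5 * n ^ 2 + 16 * n + 36) ≤
          u * (n ^ 3 + 5 * n ^ 2 + 16 * n + 36) :=
        mul_le_mul_of_nonneg_right hq2 hC.le
      have hpoly : 6 * (n + 2) * (n ^ 2 + 7 * n + 18) ^ 2 <
          144 * (n ^ 3 + 5 * n ^ 2 + 16 * n + 36) +
            24 * ((2449 / 1000 * n + 17 / 5) * (n ^ 3 + 5 * n ^ 2 + 16 * n + 36)) +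
            6 * (n + 1) * (n + 2) * (n ^ 3 + 5 * n ^ 2 + 16 * n + 36) := by
        nlinarith [pow_pos hn0 4, pow_pos hn0 3, pow_pos hn0 2, hn0]
      nlinarith [hpoly, hcu]
    exact lt_of_pow_lt_pow_left₀ 2 (by positivity) hsq
  rw [div_lt_iff₀ (by positivity : (0:ℝ) < 12 * t)]
  nlinarith [hmain]
end
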